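/- arXiv:2005.05449 — 7 statements merged into one kernel-verified Lean document; each statement's English description precedes it below -/
import Mathlib

section
/- Let P be a symmetric n×n matrix with spectral decomposition P = U diag(λ_P) U^T, and let R(P) = ||P||_tr + ι_C(P) where C = {P symmetric : 0 ⪯ P ⪯ I_n, tr(P) ≤ d}. Then for τ, α > 0, prox_{τα R}(P) = U diag(proj_{Q∩H}(λ_P − τα·1_n)) U^T, where Q = [0,1]^n and H = {x : ⟨x, 1_n⟩ ≤ d}. -/
/-!
Conjugation by the orthogonal `U` preserves the Frobenius norm and the set `C`. For `S ∈ C` put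
`T = Uᵀ S U`: its diagonal `y` lies in `Q ∩ H`, `tr S = ∑ y`, and `‖S - P‖² = ‖T - diag λ‖² ≥
‖y - λ‖²`, because dropping off-diagonal entries only decreases the Frobenius norm (this replaces
Hoffman–Wielandt). On `C` the trace norm is the trace, and completing the square turns
`τα ∑ y + ½ ‖y - λ‖²` into `½ ‖λ - τα 1 - y‖²` plus a constant, which `μ` minimises over `Q ∩ H`.
Off `C` the regularizer is `+∞`.
-/

open Matrix
open Classical

/-- The regularizer R(S) = ‖S‖_tr + ι_C(S), C = {0 ⪯ S ⪯ I, tr S ≤ d}, as an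
extended-real-valued function on matrices (+∞ off C, and on C the sum of the absolute values
of the eigenvalues). -/
noncomputable def regR (n : ℕ) (d : ℝ) (S : Matrix (Fin n) (Fin n) ℝ) : EReal :=
  if h : S.PosSemidef ∧ (1 - S).PosSemidef ∧ S.trace ≤ d then
    ((∑ i, |h.1.1.eigenvalues i| : ℝ) : EReal)
  else ⊤

section FrobeniusNorm

variable {m n R : Type*} [Fintype m] [Fintype n]

lemma sum_sq_entries_eq_trace [CommSemiring R] (A : Matrix m n R) :
    ∑ i, ∑ j, A i j ^ 2 = (Aᵀ * A).trace := by
  simp only [trace, diag, mul_apply, transpose_apply, sq]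
  exact Finset.sum_comm

lemma sum_sq_entries_conj [DecidableEq n] {U : Matrix m n ℝ} (hU : Uᵀ * U = 1)
    (M : Matrix n n ℝ) :
    ∑ i, ∑ j, (U * M * Uᵀ) i j ^ 2 = ∑ i, ∑ j, M i j ^ 2 := by
  have hconj : (U * M * Uᵀ)ᵀ * (U * M * Uᵀ) = U * (Mᵀ * M) * Uᵀ := by
    simp only [transpose_mul, transpose_transpose, Matrix.mul_assoc]
    rw [← Matrix.mul_assoc Uᵀ U, hU, Matrix.one_mul]
  rw [sum_sq_entries_eq_trace, sum_sq_entries_eq_trace, hconj, trace_mul_cycle, hU,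
    Matrix.one_mul]

lemma sum_sq_entries_conj_sub [DecidableEq n] {U : Matrix m n ℝ} (hU : Uᵀ * U = 1)
    (A B : Matrix n n ℝ) :
    ∑ i, ∑ j, ((U * A * Uᵀ) i j - (U * B * Uᵀ) i j) ^ 2 = ∑ i, ∑ j, (A i j - B i j) ^ 2 := by
  simpa only [Matrix.mul_sub, Matrix.sub_mul, Matrix.sub_apply] using
    sum_sq_entries_conj hU (A - B)

lemma sum_sq_entries_diagonal [DecidableEq n] (v : n → ℝ) :
    ∑ i, ∑ j, diagonal v i j ^ 2 = ∑ i, v i ^ 2 := by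
  simp [diagonal_apply, ite_pow]

lemma sum_sq_diag_le_sum_sq_entries (A : Matrix n n ℝ) :
    ∑ i, A i i ^ 2 ≤ ∑ i, ∑ j, A i j ^ 2 :=
  Finset.sum_le_sum fun i _ =>
    Finset.single_le_sum (fun j _ => sq_nonneg (A i j)) (Finset.mem_univ i)

end FrobeniusNorm

section CappedSets

variable {ι : Type*} [Fintype ι]

/-- The set `Q ∩ H` of the paper. -/
def cappedSimplex (d : ℝ) : Set (ι → ℝ) :=
  {x | (∀ j, x j ∈ Set.Icc (0 : ℝ) 1) ∧ ∑ j, x j ≤ d}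

/-- The set `C` of the paper. -/
def cappedSpectraplex [DecidableEq ι] (d : ℝ) : Set (Matrix ι ι ℝ) :=
  {S | S.PosSemidef ∧ (1 - S).PosSemidef ∧ S.trace ≤ d}

variable [DecidableEq ι] {d : ℝ}

lemma diagonal_mem_cappedSpectraplex {x : ι → ℝ} (hx : x ∈ cappedSimplex d) :
    diagonal x ∈ cappedSpectraplex d := by
  refine ⟨PosSemidef.diagonal fun j => (hx.1 j).1, ?_, by simpa using hx.2⟩
  rw [← diagonal_one, diagonal_sub]
  exact PosSemidef.diagonal fun j => sub_nonneg.2 (hx.1 j).2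

lemma diag_mem_cappedSimplex {S : Matrix ι ι ℝ} (hS : S ∈ cappedSpectraplex d) :
    S.diag ∈ cappedSimplex d := by
  refine ⟨fun j => ⟨hS.1.diag_nonneg, ?_⟩, hS.2.2⟩
  have h := hS.2.1.diag_nonneg (i := j)
  simp only [Matrix.sub_apply, one_apply_eq, sub_nonneg] at h
  exact h

lemma conj_mem_cappedSpectraplex {U S : Matrix ι ι ℝ} (hU : U * Uᵀ = 1)
    (hS : S ∈ cappedSpectraplex d) : U * S * Uᵀ ∈ cappedSpectraplex d := by
  have hU' : Uᵀ * U = 1 := mul_eq_one_comm.1 hU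
  have h1 : 1 - U * S * Uᵀ = U * (1 - S) * Uᵀ := by
    rw [Matrix.mul_sub, Matrix.sub_mul, Matrix.mul_one, hU]
  refine ⟨by simpa using hS.1.mul_mul_conjTranspose_same U, ?_, ?_⟩
  · rw [h1]
    simpa using hS.2.1.mul_mul_conjTranspose_same U
  · rw [trace_mul_cycle, hU', Matrix.one_mul]
    exact hS.2.2

end CappedSets

lemma Matrix.PosSemidef.sum_abs_eigenvalues_eq_trace {ι : Type*} [Fintype ι] [DecidableEq ι]
    {A : Matrix ι ι ℝ} (hA : A.PosSemidef) : ∑ i, |hA.1.eigenvalues i| = A.trace := by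
  simp [abs_of_nonneg (hA.eigenvalues_nonneg _), hA.1.trace_eq_sum_eigenvalues]

lemma regR_of_mem {n : ℕ} {d : ℝ} {S : Matrix (Fin n) (Fin n) ℝ}
    (hS : S ∈ cappedSpectraplex d) : regR n d S = S.trace := by
  have hS' : S.PosSemidef ∧ (1 - S).PosSemidef ∧ S.trace ≤ d := hS
  rw [regR, dif_pos hS', hS'.1.sum_abs_eigenvalues_eq_trace]

lemma regR_of_not_mem {n : ℕ} {d : ℝ} {S : Matrix (Fin n) (Fin n) ℝ}
    (hS : S ∉ cappedSpectraplex d) : regR n d S = ⊤ :=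
  dif_neg hS

section Objective

variable {ι : Type*} [Fintype ι]

lemma mul_sum_add_half_sum_sq_eq (c : ℝ) (lam x : ι → ℝ) :
    c * ∑ j, x j + 1 / 2 * ∑ j, (x j - lam j) ^ 2 =
      1 / 2 * ∑ j, (lam j - c - x j) ^ 2 + ∑ j, (c * lam j - c ^ 2 / 2) := by
  simp only [Finset.mul_sum, ← Finset.sum_add_distrib]
  exact Finset.sum_congr rfl fun j _ => by ring

lemma mul_sum_add_half_sum_sq_le_of_proj {c : ℝ} {lam μ x : ι → ℝ} {K : Set (ι → ℝ)}
    (hμ : ∀ y ∈ K, ∑ j, (lam j - c - μ j) ^ 2 ≤ ∑ j, (lam j - c - y j) ^ 2) (hx : x ∈ K) :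
    c * ∑ j, μ j + 1 / 2 * ∑ j, (μ j - lam j) ^ 2 ≤
      c * ∑ j, x j + 1 / 2 * ∑ j, (x j - lam j) ^ 2 := by
  rw [mul_sum_add_half_sum_sq_eq, mul_sum_add_half_sum_sq_eq]
  linarith [hμ x hx]

variable [DecidableEq ι]

lemma conj_diagonal_objective_le {d c : ℝ} {U S : Matrix ι ι ℝ} (hU : U * Uᵀ = 1)
    {lam μ : ι → ℝ}
    (hμ : ∀ y ∈ cappedSimplex d, ∑ j, (lam j - c - μ j) ^ 2 ≤ ∑ j, (lam j - c - y j) ^ 2)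
    (hS : S ∈ cappedSpectraplex d) :
    c * (U * diagonal μ * Uᵀ).trace +
        1 / 2 * ∑ i, ∑ j, ((U * diagonal μ * Uᵀ) i j - (U * diagonal lam * Uᵀ) i j) ^ 2 ≤
      c * S.trace + 1 / 2 * ∑ i, ∑ j, (S i j - (U * diagonal lam * Uᵀ) i j) ^ 2 := by
  have hU' : Uᵀ * U = 1 := mul_eq_one_comm.1 hU
  set T := Uᵀ * S * U
  have hST : S = U * T * Uᵀ := by
    simp only [T, ← Matrix.mul_assoc, hU, Matrix.one_mul]
    rw [Matrix.mul_assoc, hU, Matrix.mul_one]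
  have hT : T ∈ cappedSpectraplex d := by
    simpa using conj_mem_cappedSpectraplex (U := Uᵀ) (by simpa using hU') hS
  have hdiag : ∑ i, (T i i - lam i) ^ 2 ≤ ∑ i, ∑ j, (T i j - diagonal lam i j) ^ 2 := by
    simpa using sum_sq_diag_le_sum_sq_entries (T - diagonal lam)
  have hμ_dist :
      ∑ i, ∑ j, (diagonal μ i j - diagonal lam i j) ^ 2 = ∑ j, (μ j - lam j) ^ 2 := by
    have h := sum_sq_entries_diagonal fun j => μ j - lam j
    rwa [← diagonal_sub] at h
  calc c * (U * diagonal μ * Uᵀ).trace +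
        1 / 2 * ∑ i, ∑ j, ((U * diagonal μ * Uᵀ) i j - (U * diagonal lam * Uᵀ) i j) ^ 2
      = c * ∑ j, μ j + 1 / 2 * ∑ j, (μ j - lam j) ^ 2 := by
        rw [trace_mul_cycle, hU', Matrix.one_mul, trace_diagonal, sum_sq_entries_conj_sub hU',
          hμ_dist]
    _ ≤ c * ∑ j, T j j + 1 / 2 * ∑ j, (T j j - lam j) ^ 2 :=
        mul_sum_add_half_sum_sq_le_of_proj hμ (diag_mem_cappedSimplex hT)
    _ ≤ c * S.trace + 1 / 2 * ∑ i, ∑ j, (S i j - (U * diagonal lam * Uᵀ) i j) ^ 2 := by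
        rw [hST, sum_sq_entries_conj_sub hU', trace_mul_cycle, hU', Matrix.one_mul]
        exact add_le_add le_rfl (mul_le_mul_of_nonneg_left hdiag (by norm_num))

end Objective

/-- Proximal mapping of the regularizer: if P = U diag(λ) Uᵀ with U orthogonal, and μ is the
Euclidean projection of λ − τα·1 onto Q ∩ H (Q = [0,1]ⁿ, H = {x : ⟨x,1⟩ ≤ d}), then
S = U diag(μ) Uᵀ minimizes S ↦ τα R(S) + ½‖S − P‖²_F. -/
theorem stmt_10 (n : ℕ) (d τ α : ℝ) (hτ : 0 < τ) (hα : 0 < α)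
    (U : Matrix (Fin n) (Fin n) ℝ) (hU : U * Uᵀ = 1)
    (lam μ : Fin n → ℝ)
    (P : Matrix (Fin n) (Fin n) ℝ) (hP : P = U * Matrix.diagonal lam * Uᵀ)
    (hμmem : (∀ j, μ j ∈ Set.Icc (0 : ℝ) 1) ∧ (∑ j, μ j) ≤ d)
    (hμproj : ∀ y : Fin n → ℝ, (∀ j, y j ∈ Set.Icc (0 : ℝ) 1) → (∑ j, y j) ≤ d →
      (∑ j, (lam j - τ * α - μ j) ^ 2) ≤ ∑ j, (lam j - τ * α - y j) ^ 2) :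
    ∀ S : Matrix (Fin n) (Fin n) ℝ,
      ((τ * α : ℝ) : EReal) * regR n d (U * Matrix.diagonal μ * Uᵀ) +
          (((1 : ℝ) / 2) * ∑ i, ∑ j, ((U * Matrix.diagonal μ * Uᵀ) i j - P i j) ^ 2 : ℝ) ≤
        ((τ * α : ℝ) : EReal) * regR n d S +
          (((1 : ℝ) / 2) * ∑ i, ∑ j, (S i j - P i j) ^ 2 : ℝ) := by
  intro S
  have hμS : U * diagonal μ * Uᵀ ∈ cappedSpectraplex d :=
    conj_mem_cappedSpectraplex hU (diagonal_mem_cappedSpectraplex hμmem)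
  by_cases hS : S ∈ cappedSpectraplex d
  · rw [regR_of_mem hμS, regR_of_mem hS, hP]
    exact_mod_cast conj_diagonal_objective_le hU (fun y hy => hμproj y hy.1 hy.2) hS
  · rw [regR_of_not_mem hS, EReal.coe_mul_top_of_pos (mul_pos hτ hα), EReal.top_add_coe]
    exact le_top
end

section
/- For symmetric matrices A and B (with eigenvalues in descending order λ(A), λ(B)), the Hoffman–Wielandt inequality holds: ||A − B||²_F ≥ ||λ(A) − λ(B)||²₂. -/
/-!
Write `A = Uᵀ diag(a) U` and `B = V diag(b) Vᵀ` with `U`, `V` orthogonal, and put `W = U V`.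
The Frobenius norm is orthogonally invariant and `U (A - B) V = diag(a) W - W diag(b)`, so
`‖A - B‖²_F = ∑ᵢⱼ (aᵢ - bⱼ)² Wᵢⱼ²`, and `(Wᵢⱼ²)` is doubly stochastic. By Birkhoff's theorem this
linear function of a doubly stochastic matrix is at least its minimum over permutation matrices,
`∑ᵢ (aᵢ - b_{σ i})²`, and by the rearrangement inequality every such sum is at least the one
pairing the two eigenvalue lists in the same order.
-/

open Matrix Finset

theorem Monovary.sum_sub_sq_le_sum_sub_comp_perm_sq {ι α : Type*} [Fintype ι] [CommRing α]
    [LinearOrder α] [IsStrictOrderedRing α] {f g : ι → α} (hfg : Monovary f g)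
    (σ : Equiv.Perm ι) : ∑ i, (f i - g i) ^ 2 ≤ ∑ i, (f i - g (σ i)) ^ 2 := by
  have hexp (h : ι → α) :
      ∑ i, (f i - h i) ^ 2 = ∑ i, f i ^ 2 - 2 * ∑ i, f i * h i + ∑ i, h i ^ 2 := by
    simp only [sub_sq, sum_add_distrib, sum_sub_distrib, mul_sum, mul_assoc]
  rw [hexp g, hexp (fun i => g (σ i)), Equiv.sum_comp σ (g · ^ 2)]
  linarith [hfg.sum_mul_comp_perm_le_sum_mul (σ := σ)]

theorem Matrix.sum_sum_sq_eq_trace_mul_conjTranspose {m n : Type*} [Fintype m] [Fintype n]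
    (M : Matrix m n ℝ) : ∑ i, ∑ j, M i j ^ 2 = (M * Mᴴ).trace := by
  simp [trace, mul_apply, sq]

section DoublyStochastic

variable {ι : Type*} [Fintype ι] [DecidableEq ι]

theorem le_sum_sum_mul_of_mem_doublyStochastic {R : Type*} [Field R] [LinearOrder R]
    [IsStrictOrderedRing R] {f : ι → ι → R} {c : R}
    (hf : ∀ σ : Equiv.Perm ι, c ≤ ∑ i, f i (σ i)) {S : Matrix ι ι R}
    (hS : S ∈ doublyStochastic R ι) : c ≤ ∑ i, ∑ j, f i j * S i j := by
  have hlin : IsLinearMap R fun M : Matrix ι ι R => ∑ i, ∑ j, f i j * M i j :=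
    ⟨fun M N => by simp only [Matrix.add_apply, mul_add, sum_add_distrib],
     fun r M => by simp only [Matrix.smul_apply, smul_eq_mul, mul_sum, mul_left_comm]⟩
  have hperm : {P | ∃ σ : Equiv.Perm ι, σ.permMatrix R = P} ⊆
      {M | c ≤ ∑ i, ∑ j, f i j * M i j} := by
    rintro _ ⟨σ, rfl⟩
    simpa [Equiv.Perm.permMatrix, PEquiv.toMatrix_apply] using hf σ
  have hS' : S ∈ (doublyStochastic R ι : Set (Matrix ι ι R)) := hS
  rw [doublyStochastic_eq_convexHull_permMatrix] at hS'
  exact convexHull_min hperm (convex_halfSpace_ge hlin c) hS'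

theorem Matrix.of_sq_mem_doublyStochastic_of_mem_unitaryGroup {W : Matrix ι ι ℝ}
    (hW : W ∈ unitaryGroup ι ℝ) : of (fun i j => W i j ^ 2) ∈ doublyStochastic ℝ ι := by
  have hrow := congrFun₂ (mem_unitaryGroup_iff.mp hW)
  have hcol := congrFun₂ (mem_unitaryGroup_iff'.mp hW)
  refine mem_doublyStochastic_iff_sum.mpr ⟨fun i j => sq_nonneg _, fun i => ?_, fun j => ?_⟩
  · simpa [mul_apply, sq] using hrow i i
  · simpa [mul_apply, sq] using hcol j j

theorem Matrix.sum_sum_sq_unitary_mul_mul_unitary {U V : Matrix ι ι ℝ}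
    (hU : U ∈ unitaryGroup ι ℝ) (hV : V ∈ unitaryGroup ι ℝ) (M : Matrix ι ι ℝ) :
    ∑ i, ∑ j, (U * M * V) i j ^ 2 = ∑ i, ∑ j, M i j ^ 2 := by
  have hU' : Uᴴ * U = 1 := mem_unitaryGroup_iff'.mp hU
  have hV' : V * Vᴴ = 1 := mem_unitaryGroup_iff.mp hV
  rw [sum_sum_sq_eq_trace_mul_conjTranspose, sum_sum_sq_eq_trace_mul_conjTranspose,
    conjTranspose_mul, conjTranspose_mul, trace_mul_comm]
  simp only [Matrix.mul_assoc]
  rw [← Matrix.mul_assoc Uᴴ, hU', Matrix.one_mul, trace_mul_comm, Matrix.mul_assoc,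
    Matrix.mul_assoc, hV', Matrix.mul_one, trace_mul_comm]

theorem Matrix.IsHermitian.star_eigenvectorUnitary_mul {𝕜 : Type*} [RCLike 𝕜]
    {A : Matrix ι ι 𝕜} (hA : A.IsHermitian) :
    star (hA.eigenvectorUnitary : Matrix ι ι 𝕜) * A =
      diagonal (RCLike.ofReal ∘ hA.eigenvalues) * star (hA.eigenvectorUnitary : Matrix ι ι 𝕜) := by
  have := congrArg (star (hA.eigenvectorUnitary : Matrix ι ι 𝕜) * ·) hA.spectral_theorem
  simpa [← Matrix.mul_assoc] using this

theorem Matrix.IsHermitian.mul_eigenvectorUnitary {𝕜 : Type*} [RCLike 𝕜]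
    {A : Matrix ι ι 𝕜} (hA : A.IsHermitian) :
    A * (hA.eigenvectorUnitary : Matrix ι ι 𝕜) =
      (hA.eigenvectorUnitary : Matrix ι ι 𝕜) * diagonal (RCLike.ofReal ∘ hA.eigenvalues) := by
  have := congrArg (· * (hA.eigenvectorUnitary : Matrix ι ι 𝕜)) hA.spectral_theorem
  simpa [Matrix.mul_assoc] using this

theorem Matrix.IsHermitian.exists_mem_doublyStochastic_sum_sum_sq_sub_eq {A B : Matrix ι ι ℝ}
    (hA : A.IsHermitian) (hB : B.IsHermitian) :
    ∃ S ∈ doublyStochastic ℝ ι, ∑ i, ∑ j, (A - B) i j ^ 2 =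
      ∑ i, ∑ j, (hA.eigenvalues i - hB.eigenvalues j) ^ 2 * S i j := by
  obtain ⟨U, hU, hAU⟩ : ∃ U ∈ unitaryGroup ι ℝ, U * A = diagonal hA.eigenvalues * U :=
    ⟨_, (star hA.eigenvectorUnitary).2, by simpa using hA.star_eigenvectorUnitary_mul⟩
  obtain ⟨V, hV, hBV⟩ : ∃ V ∈ unitaryGroup ι ℝ, B * V = V * diagonal hB.eigenvalues :=
    ⟨_, hB.eigenvectorUnitary.2, by simpa using hB.mul_eigenvectorUnitary⟩
  refine ⟨_, of_sq_mem_doublyStochastic_of_mem_unitaryGroup (mul_mem hU hV), ?_⟩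
  have hconj : U * (A - B) * V =
      diagonal hA.eigenvalues * (U * V) - U * V * diagonal hB.eigenvalues := by
    rw [Matrix.mul_sub, Matrix.sub_mul, hAU, Matrix.mul_assoc U B, hBV, Matrix.mul_assoc,
      Matrix.mul_assoc]
  rw [← sum_sum_sq_unitary_mul_mul_unitary hU hV, hconj]
  simp only [sub_apply, diagonal_mul, mul_diagonal, of_apply]
  exact sum_congr rfl fun i _ => sum_congr rfl fun j _ => by ring

end DoublyStochastic

/-- Hoffman–Wielandt inequality: for symmetric matrices A, B with eigenvalue vectors μ, ν
listed in descending order, ‖A − B‖²_F ≥ ‖μ − ν‖²₂. -/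
theorem stmt_11 (n : ℕ) (A B : Matrix (Fin n) (Fin n) ℝ)
    (hA : A.IsHermitian) (hB : B.IsHermitian)
    (μ ν : Fin n → ℝ) (σA σB : Equiv.Perm (Fin n))
    (hμ : μ = hA.eigenvalues ∘ σA) (hν : ν = hB.eigenvalues ∘ σB)
    (hμd : Antitone μ) (hνd : Antitone ν) :
    (∑ i, (μ i - ν i) ^ 2) ≤ ∑ i, ∑ j, ((A - B) i j) ^ 2 := by
  obtain ⟨S, hS, hfrob⟩ := hA.exists_mem_doublyStochastic_sum_sum_sq_sub_eq hB
  rw [hfrob]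
  refine le_sum_sum_mul_of_mem_doublyStochastic (fun σ => ?_) hS
  subst hμ hν
  calc _ ≤ ∑ k, (hA.eigenvalues (σA k) - hB.eigenvalues (σ (σA k))) ^ 2 := by
        simpa using (hμd.monovary hνd).sum_sub_sq_le_sum_sub_comp_perm_sq
          (σA.trans (σ.trans σB.symm))
    _ = _ := Equiv.sum_comp σA fun i => (hA.eigenvalues i - hB.eigenvalues (σ i)) ^ 2
end

section
/- Let λ ∈ R^n, d ∈ (0,n], Q = [0,1]^n and H = {x ∈ R^n : ⟨x, 1_n⟩ ≤ d}. If ⟨proj_Q(λ), 1_n⟩ ≤ d, then proj_{Q∩H}(λ) = proj_Q(λ); otherwise proj_{Q∩H}(λ) = proj_Q(λ − t̂·1_n), where t̂ is the positive root of φ(t) = ⟨proj_Q(λ − t·1_n), 1_n⟩ − d. -/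
/-!
Clipping to `[0,1]` is the projection onto the interval, so it satisfies the variational
inequality `(x - c) * (c - y) ≥ 0` for every `y ∈ [0,1]`. Applied to `λ - t·1` and summed, this gives
`‖λ - v‖² + 2t (⟨v,1⟩ - ⟨y,1⟩) ≤ ‖λ - y‖²` for `v = proj_Q(λ - t·1)` and all `y ∈ Q`. With `t = 0`
this is optimality of `proj_Q(λ)`; with `t > 0` and `⟨v,1⟩ = d ≥ ⟨y,1⟩` the extra term is
nonnegative, so `v` is optimal over `Q ∩ H`.
-/

open Finset Set

lemma sub_mul_sub_clamp_nonneg (x y : ℝ) (hy : y ∈ Icc (0 : ℝ) 1) :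
    0 ≤ (x - max (min x 1) 0) * (max (min x 1) 0 - y) := by
  obtain ⟨hy0, hy1⟩ := hy
  rcases le_total x 0 with h0 | h0
  · rw [min_eq_left (h0.trans zero_le_one), max_eq_right h0]
    nlinarith
  rcases le_total 1 x with h1 | h1
  · rw [min_eq_right h1, max_eq_left zero_le_one]
    nlinarith
  · rw [min_eq_left h1, max_eq_left h0]
    simp

lemma sq_sub_clamp_sub_add_le (x t y : ℝ) (hy : y ∈ Icc (0 : ℝ) 1) :
    (x - max (min (x - t) 1) 0) ^ 2 + 2 * t * (max (min (x - t) 1) 0 - y) ≤ (x - y) ^ 2 := by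
  have h := sub_mul_sub_clamp_nonneg (x - t) y hy
  nlinarith [sq_nonneg (max (min (x - t) 1) 0 - y)]

lemma sum_sq_sub_clamp_sub_add_le {ι : Type*} [Fintype ι] (lam y : ι → ℝ) (t : ℝ)
    (hy : ∀ j, y j ∈ Icc (0 : ℝ) 1) :
    ∑ j, (lam j - max (min (lam j - t) 1) 0) ^ 2
        + 2 * t * (∑ j, max (min (lam j - t) 1) 0 - ∑ j, y j)
      ≤ ∑ j, (lam j - y j) ^ 2 := by
  rw [← sum_sub_distrib, mul_sum, ← sum_add_distrib]
  exact sum_le_sum fun j _ => sq_sub_clamp_sub_add_le (lam j) t (y j) (hy j)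

theorem stmt_12_general (n : ℕ) (d : ℝ) (lam : Fin n → ℝ) :
    let clip : (Fin n → ℝ) → (Fin n → ℝ) := fun x j => max (min (x j) 1) 0
    let QH : Set (Fin n → ℝ) := {y | (∀ j, y j ∈ Set.Icc (0 : ℝ) 1) ∧ (∑ j, y j) ≤ d}
    let isProj : (Fin n → ℝ) → Prop := fun v =>
      v ∈ QH ∧ ∀ y ∈ QH, (∑ j, (lam j - v j) ^ 2) ≤ ∑ j, (lam j - y j) ^ 2
    ((∑ j, clip lam j) ≤ d → isProj (clip lam)) ∧
    (¬ (∑ j, clip lam j) ≤ d →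
      ∀ t : ℝ, 0 < t → (∑ j, clip (fun j => lam j - t) j) - d = 0 →
        isProj (clip (fun j => lam j - t))) := by
  intro clip QH isProj
  have clip_mem (x : Fin n → ℝ) (j : Fin n) : clip x j ∈ Icc (0 : ℝ) 1 :=
    ⟨le_max_right _ _, max_le (min_le_right _ _) zero_le_one⟩
  refine ⟨fun hsum => ⟨⟨clip_mem lam, hsum⟩, fun y hy => ?_⟩, fun _ t ht hroot => ?_⟩
  · simpa using sum_sq_sub_clamp_sub_add_le lam y 0 hy.1
  · refine ⟨⟨clip_mem _, by linarith⟩, fun y hy => ?_⟩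
    have hgap : 0 ≤ 2 * t * (∑ j, clip (fun j => lam j - t) j - ∑ j, y j) :=
      mul_nonneg (by positivity) (by linarith [hy.2])
    linarith [sum_sq_sub_clamp_sub_add_le lam y t hy.1]

/-- Projection onto the truncated hypercube Q ∩ H, Q = [0,1]ⁿ, H = {x : ⟨x,1⟩ ≤ d}:
if the clipping proj_Q(λ) already satisfies the trace bound, it is the projection;
otherwise the projection is proj_Q(λ − t̂·1) where t̂ > 0 is a root of
φ(t) = ⟨proj_Q(λ − t·1), 1⟩ − d. -/
theorem stmt_12 (n : ℕ) (d : ℝ) (hd : 0 < d) (hdn : d ≤ n) (lam : Fin n → ℝ) :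
    let clip : (Fin n → ℝ) → (Fin n → ℝ) := fun x j => max (min (x j) 1) 0
    let QH : Set (Fin n → ℝ) := {y | (∀ j, y j ∈ Set.Icc (0 : ℝ) 1) ∧ (∑ j, y j) ≤ d}
    let isProj : (Fin n → ℝ) → Prop := fun v =>
      v ∈ QH ∧ ∀ y ∈ QH, (∑ j, (lam j - v j) ^ 2) ≤ ∑ j, (lam j - y j) ^ 2
    ((∑ j, clip lam j) ≤ d → isProj (clip lam)) ∧
    (¬ (∑ j, clip lam j) ≤ d →
      ∀ t : ℝ, 0 < t → (∑ j, clip (fun j => lam j - t) j) - d = 0 →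
        isProj (clip (fun j => lam j - t))) :=
  stmt_12_general n d lam
end

section
/- Only the positive components of λ influence its projection onto Q ∩ H: proj_{Q∩H}(λ) = proj_{Q∩H}(λ₊), where λ₊ is the componentwise positive part of λ. -/
/-!
Zeroing a coordinate keeps a point of `Q ∩ H`, so a nearest point to `λ` vanishes wherever
`λ_j ≤ 0`, and so does a nearest point to `λ₊`. On points vanishing there the two squared
distances `‖λ - y‖²` and `‖λ₊ - y‖²` differ by the constant `∑ j, (min λ_j 0)²`, hence both
projections minimise `‖λ₊ - ·‖²` over the convex set `Q ∩ H`, and strict convexity makes that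
minimiser unique.
-/

open Finset Set

variable {ι : Type*} [Fintype ι]

theorem strictConvexOn_sum_sq_sub (a : ι → ℝ) :
    StrictConvexOn ℝ univ fun y : ι → ℝ => ∑ j, (a j - y j) ^ 2 := by
  refine ⟨convex_univ, fun x _ y _ hxy s t hs ht hst => ?_⟩
  obtain ⟨j, hj⟩ := Function.ne_iff.mp hxy
  have hpos : 0 < ∑ i, (x i - y i) ^ 2 :=
    Finset.sum_pos' (fun i _ => sq_nonneg _) ⟨j, mem_univ j, sq_pos_of_ne_zero (sub_ne_zero.2 hj)⟩
  have hgap : s • ∑ i, (a i - x i) ^ 2 + t • ∑ i, (a i - y i) ^ 2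
      - ∑ i, (a i - (s • x + t • y) i) ^ 2 = s * t * ∑ i, (x i - y i) ^ 2 := by
    simp only [smul_eq_mul, Pi.add_apply, Pi.smul_apply, Finset.mul_sum, ← Finset.sum_add_distrib,
      ← Finset.sum_sub_distrib]
    obtain rfl : s = 1 - t := by linarith
    exact Finset.sum_congr rfl fun i _ => by ring
  nlinarith [mul_pos hs ht]

theorem eq_zero_of_isMinOn_sum_sq_sub [DecidableEq ι] {S : Set (ι → ℝ)} {a p : ι → ℝ} {j : ι}
    (hmin : IsMinOn (fun y : ι → ℝ => ∑ i, (a i - y i) ^ 2) S p)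
    (hupdate : Function.update p j 0 ∈ S) (hpj : 0 ≤ p j) (haj : a j ≤ 0) : p j = 0 := by
  by_contra hne
  have hpos : 0 < p j := hpj.lt_of_ne' hne
  refine (isMinOn_iff.mp hmin _ hupdate).not_gt (Finset.sum_lt_sum (fun i _ => ?_) ?_)
  · rcases eq_or_ne i j with rfl | hij
    · simp only [Function.update_self]; nlinarith
    · simp only [Function.update_of_ne hij, le_refl]
  · exact ⟨j, mem_univ j, by simp only [Function.update_self]; nlinarith⟩

theorem sum_sq_sub_eq_sum_sq_max_sub_add (lam r : ι → ℝ) (hr : ∀ j, lam j ≤ 0 → r j = 0) :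
    ∑ j, (lam j - r j) ^ 2 = ∑ j, (max (lam j) 0 - r j) ^ 2 + ∑ j, min (lam j) 0 ^ 2 := by
  rw [← Finset.sum_add_distrib]
  refine Finset.sum_congr rfl fun j _ => ?_
  rcases le_total (lam j) 0 with h | h
  · simp [hr j h, max_eq_right h, min_eq_left h]
  · simp [max_eq_left h, min_eq_right h]

section CubeInterHalfSpace

variable (d : ℝ)

def cubeInterHalfSpace : Set (ι → ℝ) := {y : ι → ℝ | (∀ j, y j ∈ Icc (0 : ℝ) 1) ∧ ∑ j, y j ≤ d}

theorem convex_cubeInterHalfSpace : Convex ℝ (cubeInterHalfSpace (ι := ι) d) := by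
  have hlin : IsLinearMap ℝ fun y : ι → ℝ => ∑ j, y j :=
    ⟨fun x y => Finset.sum_add_distrib, fun c x => by simp [Finset.mul_sum]⟩
  simpa only [cubeInterHalfSpace, Set.ofPred_and, Set.pi, Set.mem_univ, true_implies] using
    (convex_pi (s := univ) fun j _ => convex_Icc (0 : ℝ) 1).inter (convex_halfSpace_le hlin d)

theorem mem_cubeInterHalfSpace_of_le {y z : ι → ℝ}
    (hy : y ∈ cubeInterHalfSpace d) (hz : 0 ≤ z) (hzy : z ≤ y) :
    z ∈ cubeInterHalfSpace d :=
  ⟨fun j => ⟨hz j, (hzy j).trans (hy.1 j).2⟩,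
    (Finset.sum_le_sum fun j _ => hzy j).trans hy.2⟩

theorem update_zero_mem_cubeInterHalfSpace [DecidableEq ι] {y : ι → ℝ}
    (hy : y ∈ cubeInterHalfSpace d) (j : ι) :
    Function.update y j 0 ∈ cubeInterHalfSpace d :=
  mem_cubeInterHalfSpace_of_le d hy (le_update_iff.2 ⟨le_rfl, fun i _ => (hy.1 i).1⟩)
    (update_le_self_iff.2 (hy.1 j).1)

end CubeInterHalfSpace

theorem stmt_15_general (n : ℕ) (d : ℝ) (lam : Fin n → ℝ) (p q : Fin n → ℝ) :
    let QH : Set (Fin n → ℝ) := {y | (∀ j, y j ∈ Set.Icc (0 : ℝ) 1) ∧ (∑ j, y j) ≤ d}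
    let lamPlus : Fin n → ℝ := fun j => max (lam j) 0
    (p ∈ QH ∧ ∀ y ∈ QH, (∑ j, (lam j - p j) ^ 2) ≤ ∑ j, (lam j - y j) ^ 2) →
    (q ∈ QH ∧ ∀ y ∈ QH, (∑ j, (lamPlus j - q j) ^ 2) ≤ ∑ j, (lamPlus j - y j) ^ 2) →
    p = q := by
  intro QH lamPlus ⟨hpQH, hpmin⟩ ⟨hqQH, hqmin⟩
  have hp0 : ∀ j, lam j ≤ 0 → p j = 0 := fun j hj =>
    eq_zero_of_isMinOn_sum_sq_sub (isMinOn_iff.2 hpmin)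
      (update_zero_mem_cubeInterHalfSpace d hpQH j) (hpQH.1 j).1 hj
  have hq0 : ∀ j, lam j ≤ 0 → q j = 0 := fun j hj =>
    eq_zero_of_isMinOn_sum_sq_sub (isMinOn_iff.2 hqmin)
      (update_zero_mem_cubeInterHalfSpace d hqQH j) (hqQH.1 j).1 (max_le hj le_rfl)
  have hpmin' : IsMinOn (fun y : Fin n → ℝ => ∑ j, (lamPlus j - y j) ^ 2) QH p := by
    refine isMinOn_iff.2 fun y hy => ?_
    have hpq := hpmin q hqQH
    rw [sum_sq_sub_eq_sum_sq_max_sub_add lam p hp0,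
      sum_sq_sub_eq_sum_sq_max_sub_add lam q hq0] at hpq
    exact (le_of_add_le_add_right hpq).trans (hqmin y hy)
  exact ((strictConvexOn_sum_sq_sub lamPlus).subset (subset_univ QH)
    (convex_cubeInterHalfSpace d)).eq_of_isMinOn hpmin' (isMinOn_iff.2 hqmin) hpQH hqQH

/-- Only the positive components of λ influence the projection onto Q ∩ H:
the nearest point of Q ∩ H to λ coincides with the nearest point of Q ∩ H to λ₊. -/
theorem stmt_15 (n : ℕ) (d : ℝ) (hd : 0 < d) (lam : Fin n → ℝ) (p q : Fin n → ℝ) :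
    let QH : Set (Fin n → ℝ) := {y | (∀ j, y j ∈ Set.Icc (0 : ℝ) 1) ∧ (∑ j, y j) ≤ d}
    let lamPlus : Fin n → ℝ := fun j => max (lam j) 0
    (p ∈ QH ∧ ∀ y ∈ QH, (∑ j, (lam j - p j) ^ 2) ≤ ∑ j, (lam j - y j) ^ 2) →
    (q ∈ QH ∧ ∀ y ∈ QH, (∑ j, (lamPlus j - q j) ^ 2) ≤ ∑ j, (lamPlus j - y j) ^ 2) →
    p = q :=
  stmt_15_general n d lam p q
end

section
/- Let Π_L be the orthogonal projector onto a d_L-dimensional subspace L of R^n, and let x_1,…,x_N ∈ R^n with N ≥ d_L. Define the permeance statistic P_L = min over unit vectors u ∈ L of Σ_k |⟨u, x_k⟩|. Then for any matrix A ∈ R^{n,n}: Σ_{k=1}^N ||A Π_L x_k||₂ ≥ P_L · ||A Π_L||_F ≥ (P_L / √d_L) · ||A Π_L||_tr. -/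
/-!
Let `M = A Π_L` and let `μ_i`, `v_i` be the eigenvalues and an orthonormal eigenbasis of `Mᵀ M`, so
that `‖M x‖² = Σ_i μ_i ⟨v_i, x⟩²` and `Σ_i μ_i = ‖M‖_F²`. Since `Mᵀ = Π_L Mᵀ`, every `v_i` with
`μ_i ≠ 0` is a unit vector of `L`, whence `Σ_k |⟨v_i, x_k⟩| ≥ P_L`. Weighted Cauchy–Schwarz gives
`Σ_i μ_i |⟨v_i, x_k⟩| ≤ ‖M‖_F ‖M x_k‖`, and summing over `k` yields `P_L ‖M‖_F² ≤ ‖M‖_F Σ_k ‖M x_k‖`.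
The second inequality is Cauchy–Schwarz on the at most `rank M ≤ d_L` nonzero singular values.
-/

open Matrix

/-- Nuclear norm (sum of singular values) of a real matrix M, as the sum of the square roots
of the eigenvalues of M Mᵀ. -/
noncomputable def nucNorm (n : ℕ) (M : Matrix (Fin n) (Fin n) ℝ) : ℝ :=
  ∑ i, Real.sqrt ((Matrix.isHermitian_mul_conjTranspose_self M).eigenvalues i)

variable {ι l m : Type*} [Fintype ι] [Fintype l] [Fintype m]

namespace Matrix.IsHermitian

variable [DecidableEq m] {B : Matrix m m ℝ}

theorem eigenvectorBasis_dotProduct_mulVec (hB : B.IsHermitian) (i : m) (y : m → ℝ) :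
    ⇑(hB.eigenvectorBasis i) ⬝ᵥ (B *ᵥ y) =
      hB.eigenvalues i * (⇑(hB.eigenvectorBasis i) ⬝ᵥ y) := by
  have hBt : Bᵀ = B := by simpa [conjTranspose_eq_transpose_of_trivial] using hB.eq
  rw [dotProduct_mulVec, ← mulVec_transpose, hBt, hB.mulVec_eigenvectorBasis, smul_dotProduct,
    smul_eq_mul]

theorem dotProduct_mulVec_eq_sum_eigenvalues (hB : B.IsHermitian) (y : m → ℝ) :
    y ⬝ᵥ (B *ᵥ y) = ∑ i, hB.eigenvalues i * (⇑(hB.eigenvectorBasis i) ⬝ᵥ y) ^ 2 := by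
  have h := hB.eigenvectorBasis.sum_inner_mul_inner (WithLp.toLp 2 y) (WithLp.toLp 2 (B *ᵥ y))
  simp only [EuclideanSpace.inner_eq_star_dotProduct, star_trivial] at h
  rw [dotProduct_comm, ← h]
  refine Finset.sum_congr rfl fun i _ => ?_
  rw [dotProduct_comm (B *ᵥ y), eigenvectorBasis_dotProduct_mulVec]
  ring

theorem sum_sq_eigenvectorBasis (hB : B.IsHermitian) (i : m) :
    ∑ j, hB.eigenvectorBasis i j ^ 2 = 1 := by
  have h := hB.eigenvectorBasis.orthonormal.1 i
  rw [EuclideanSpace.norm_eq, Real.sqrt_eq_one] at h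
  simpa using h

theorem sum_eigenvalues (hB : B.IsHermitian) : ∑ i, hB.eigenvalues i = B.trace := by
  simp [hB.trace_eq_sum_eigenvalues]

theorem mulVec_eigenvectorBasis_of_mul_eq (hB : B.IsHermitian) {P : Matrix m m ℝ}
    (hPB : P * B = B) {i : m} (hi : hB.eigenvalues i ≠ 0) :
    P *ᵥ ⇑(hB.eigenvectorBasis i) = ⇑(hB.eigenvectorBasis i) := by
  have hev := hB.mulVec_eigenvectorBasis i
  refine smul_right_injective (m → ℝ) hi ?_
  beta_reduce
  rw [← mulVec_smul, ← hev, mulVec_mulVec, hPB]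

end Matrix.IsHermitian

theorem Matrix.trace_conjTranspose_mul_self_eq_sum_sq (M : Matrix l m ℝ) :
    (Mᴴ * M).trace = ∑ i, ∑ j, M i j ^ 2 := by
  simp only [trace, diag_apply, mul_apply, conjTranspose_apply, star_trivial, sq]
  exact Finset.sum_comm

theorem Matrix.trace_mul_conjTranspose_self_eq_sum_sq (M : Matrix l m ℝ) :
    (M * Mᴴ).trace = ∑ i, ∑ j, M i j ^ 2 := by
  simp [trace, mul_apply, sq]

theorem Matrix.sum_sq_mulVec_eq_sum_eigenvalues [DecidableEq m] (M : Matrix l m ℝ) (y : m → ℝ) :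
    ∑ i, (M *ᵥ y) i ^ 2 = ∑ i, (isHermitian_conjTranspose_mul_self M).eigenvalues i *
      (⇑((isHermitian_conjTranspose_mul_self M).eigenvectorBasis i) ⬝ᵥ y) ^ 2 := by
  rw [← IsHermitian.dotProduct_mulVec_eq_sum_eigenvalues, ← mulVec_mulVec, dotProduct_mulVec,
    conjTranspose_eq_transpose_of_trivial, vecMul_transpose]
  simp [dotProduct, sq]

theorem Real.sum_mul_abs_le_sqrt_mul_sqrt (w a : ι → ℝ) (hw : ∀ i, 0 ≤ w i) :
    ∑ i, w i * |a i| ≤ √(∑ i, w i) * √(∑ i, w i * a i ^ 2) := by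
  have hwa : ∀ i, 0 ≤ w i * a i ^ 2 := fun i => mul_nonneg (hw i) (sq_nonneg _)
  calc ∑ i, w i * |a i| = ∑ i, √(w i) * √(w i * a i ^ 2) := by
        refine Finset.sum_congr rfl fun i _ => ?_
        rw [Real.sqrt_mul (hw i), Real.sqrt_sq_eq_abs, ← mul_assoc, Real.mul_self_sqrt (hw i)]
    _ ≤ √(∑ i, w i) * √(∑ i, w i * a i ^ 2) := Real.sum_sqrt_mul_sqrt_le _ hw hwa

theorem Real.sum_sqrt_le_sqrt_card_mul_sqrt (f : ι → ℝ) (hf : ∀ i, 0 ≤ f i) :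
    ∑ i, √(f i) ≤ √(Fintype.card {i // f i ≠ 0}) * √(∑ i, f i) := by
  classical
  have := Real.sum_sqrt_mul_sqrt_le (Finset.univ.filter fun i => f i ≠ 0)
    (f := fun _ => (1 : ℝ)) (g := f) (fun _ => zero_le_one) hf
  simp only [Real.sqrt_one, one_mul, Finset.sum_const, nsmul_eq_mul, mul_one,
    Finset.sum_filter_ne_zero] at this
  rwa [Finset.sum_filter_of_ne (p := fun i => f i ≠ 0)
    fun i _ h hfi => h (by rw [hfi, Real.sqrt_zero]), ← Fintype.card_subtype] at this

noncomputable def permeance (P : Matrix m m ℝ) (x : ι → m → ℝ) : ℝ :=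
  sInf {c : ℝ | ∃ u : m → ℝ, P *ᵥ u = u ∧ ∑ i, u i ^ 2 = 1 ∧ c = ∑ k, |u ⬝ᵥ x k|}

theorem permeance_nonneg (P : Matrix m m ℝ) (x : ι → m → ℝ) : 0 ≤ permeance P x :=
  Real.sInf_nonneg <| by rintro c ⟨u, -, -, rfl⟩; positivity

theorem permeance_le {P : Matrix m m ℝ} (x : ι → m → ℝ) {u : m → ℝ} (hu : P *ᵥ u = u)
    (hu1 : ∑ i, u i ^ 2 = 1) : permeance P x ≤ ∑ k, |u ⬝ᵥ x k| :=
  csInf_le ⟨0, by rintro c ⟨u, -, -, rfl⟩; positivity⟩ ⟨u, hu, hu1, rfl⟩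

theorem permeance_mul_sum_sq_le [DecidableEq m] {P : Matrix m m ℝ} (hP : P.IsHermitian)
    {M : Matrix l m ℝ} (hMP : M * P = M) (x : ι → m → ℝ) :
    permeance P x * ∑ i, ∑ j, M i j ^ 2 ≤
      √(∑ i, ∑ j, M i j ^ 2) * ∑ k, √(∑ i, (M *ᵥ x k) i ^ 2) := by
  set hH := isHermitian_conjTranspose_mul_self M
  set μ := hH.eigenvalues
  set v := hH.eigenvectorBasis
  have hμ : ∀ i, 0 ≤ μ i := (posSemidef_conjTranspose_mul_self M).eigenvalues_nonneg
  have hsum : ∑ i, μ i = ∑ i, ∑ j, M i j ^ 2 := by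
    rw [hH.sum_eigenvalues, trace_conjTranspose_mul_self_eq_sum_sq]
  have hPH : P * (Mᴴ * M) = Mᴴ * M := by
    rw [← Matrix.mul_assoc, ← hP.eq, ← conjTranspose_mul, hMP]
  calc permeance P x * ∑ i, ∑ j, M i j ^ 2 = ∑ i, μ i * permeance P x := by
        rw [← hsum, Finset.mul_sum]
        exact Finset.sum_congr rfl fun i _ => mul_comm _ _
    _ ≤ ∑ i, μ i * ∑ k, |⇑(v i) ⬝ᵥ x k| := by
        refine Finset.sum_le_sum fun i _ => ?_
        rcases eq_or_ne (μ i) 0 with h0 | h0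
        · simp [h0]
        · exact mul_le_mul_of_nonneg_left (permeance_le x
            (hH.mulVec_eigenvectorBasis_of_mul_eq hPH h0) (hH.sum_sq_eigenvectorBasis i)) (hμ i)
    _ = ∑ k, ∑ i, μ i * |⇑(v i) ⬝ᵥ x k| := by
        simp_rw [Finset.mul_sum]
        exact Finset.sum_comm
    _ ≤ ∑ k, √(∑ i, μ i) * √(∑ i, (M *ᵥ x k) i ^ 2) := by
        gcongr with k
        rw [sum_sq_mulVec_eq_sum_eigenvalues]
        exact Real.sum_mul_abs_le_sqrt_mul_sqrt _ _ hμ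
    _ = √(∑ i, ∑ j, M i j ^ 2) * ∑ k, √(∑ i, (M *ᵥ x k) i ^ 2) := by
        rw [hsum, Finset.mul_sum]

theorem permeance_mul_sqrt_sum_sq_le [DecidableEq m] {P : Matrix m m ℝ} (hP : P.IsHermitian)
    {M : Matrix l m ℝ} (hMP : M * P = M) (x : ι → m → ℝ) :
    permeance P x * √(∑ i, ∑ j, M i j ^ 2) ≤ ∑ k, √(∑ i, (M *ᵥ x k) i ^ 2) := by
  rcases (Real.sqrt_nonneg (∑ i, ∑ j, M i j ^ 2)).eq_or_lt with hF | hF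
  · rw [← hF, mul_zero]
    positivity
  · refine le_of_mul_le_mul_left ?_ hF
    calc √(∑ i, ∑ j, M i j ^ 2) * (permeance P x * √(∑ i, ∑ j, M i j ^ 2))
        = permeance P x * ∑ i, ∑ j, M i j ^ 2 := by
          rw [mul_left_comm, Real.mul_self_sqrt (by positivity)]
      _ ≤ _ := permeance_mul_sum_sq_le hP hMP x

theorem nucNorm_le_sqrt_rank_mul_sqrt_sum_sq {n : ℕ} (M : Matrix (Fin n) (Fin n) ℝ) :
    nucNorm n M ≤ √M.rank * √(∑ i, ∑ j, M i j ^ 2) := by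
  set hH := isHermitian_mul_conjTranspose_self M
  have h := Real.sum_sqrt_le_sqrt_card_mul_sqrt hH.eigenvalues
    (posSemidef_self_mul_conjTranspose M).eigenvalues_nonneg
  rwa [← hH.rank_eq_card_non_zero_eigs, rank_self_mul_conjTranspose, hH.sum_eigenvalues,
    trace_mul_conjTranspose_self_eq_sum_sq] at h

theorem stmt_16_general (n N dL : ℕ)
    (Pr : Matrix (Fin n) (Fin n) ℝ) (hPr : Pr.IsHermitian) (hproj : Pr * Pr = Pr)
    (hrank : Pr.rank = dL)
    (x : Fin N → (Fin n → ℝ))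
    (A : Matrix (Fin n) (Fin n) ℝ) :
    let PL : ℝ := sInf {c : ℝ | ∃ u : Fin n → ℝ, Pr.mulVec u = u ∧ (∑ i, (u i) ^ 2) = 1 ∧
      c = ∑ k, |∑ i, u i * x k i|}
    let frob : ℝ := Real.sqrt (∑ i, ∑ j, ((A * Pr) i j) ^ 2)
    PL * frob ≤ (∑ k, Real.sqrt (∑ i, ((A * Pr).mulVec (x k) i) ^ 2)) ∧
      (PL / Real.sqrt dL) * nucNorm n (A * Pr) ≤ PL * frob := by
  intro PL frob
  have hPL : 0 ≤ PL := permeance_nonneg Pr x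
  have hnuc : nucNorm n (A * Pr) ≤ √dL * frob := by
    refine (nucNorm_le_sqrt_rank_mul_sqrt_sum_sq _).trans ?_
    gcongr
    exact hrank ▸ rank_mul_le_right A Pr
  refine ⟨permeance_mul_sqrt_sum_sq_le hPr (by rw [mul_assoc, hproj]) x, ?_⟩
  calc PL / √dL * nucNorm n (A * Pr) ≤ PL / √dL * (√dL * frob) := by gcongr
    _ = PL / √dL * √dL * frob := by ring
    _ ≤ PL * frob := by
        gcongr
        rcases eq_or_ne (√dL) 0 with hd | hd
        · simpa [hd] using hPL
        · rw [div_mul_cancel₀ _ hd]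

/-- Permeance lemma: with Pr_L the orthogonal projector onto a d_L-dimensional subspace L,
data points x₁,…,x_N (N ≥ d_L), and the permeance statistic
P_L = inf over unit u ∈ L of Σ_k |⟨u,x_k⟩|, for any A:
Σ_k ‖A Pr_L x_k‖₂ ≥ P_L ‖A Pr_L‖_F ≥ (P_L/√d_L) ‖A Pr_L‖_tr. -/
theorem stmt_16 (n N dL : ℕ) (hdL : 0 < dL) (hN : dL ≤ N)
    (Pr : Matrix (Fin n) (Fin n) ℝ) (hPr : Pr.IsHermitian) (hproj : Pr * Pr = Pr)
    (hrank : Pr.rank = dL)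
    (x : Fin N → (Fin n → ℝ))
    (A : Matrix (Fin n) (Fin n) ℝ) :
    let PL : ℝ := sInf {c : ℝ | ∃ u : Fin n → ℝ, Pr.mulVec u = u ∧ (∑ i, (u i) ^ 2) = 1 ∧
      c = ∑ k, |∑ i, u i * x k i|}
    let frob : ℝ := Real.sqrt (∑ i, ∑ j, ((A * Pr) i j) ^ 2)
    PL * frob ≤ (∑ k, Real.sqrt (∑ i, ((A * Pr).mulVec (x k) i) ^ 2)) ∧
      (PL / Real.sqrt dL) * nucNorm n (A * Pr) ≤ PL * frob :=
  stmt_16_general n N dL Pr hPr hproj hrank x A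
end

section
/- Let P be symmetric with eigenvalue decomposition P = U diag(λ_P) U^T (eigenvalues in descending order), let O_d be the set of symmetric matrices with eigenvalues in {0,1} and trace at most d. For every Schatten p-norm (1 ≤ p ≤ ∞), a nearest point of O_d to P is Π = U diag(λ̂) U^T, where λ̂_k = 1 if k ≤ d and λ_{P,k} ≥ 1/2, and λ̂_k = 0 otherwise. -/
/-!
Let `Π'` be any orthoprojector of trace at most `d`, and sort its eigenvalues decreasingly into
a `0/1` vector `β` whose ones sit in the first `tr Π' ≤ d` slots. By Lidskii's theorem the
vector `λ - β` of differences of sorted eigenvalues of `P` and `Π'` is majorized by the spectrum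
of `P - Π'`. Majorization `x ≺ y` gives `∑ φ (x i) ≤ ∑ φ (y i)` for every convex `φ` (Karamata),
hence `‖x‖_p ≤ ‖y‖_p` for all `1 ≤ p ≤ ∞`. On the other hand `P - Π` has spectrum `λ - λ̂`, and
`λ̂ k` is the point of `{0, 1}` nearest to `λ k` among those allowed by the rank constraint, so
`|λ k - λ̂ k| ≤ |λ k - β k|` entrywise.

Lidskii's theorem is reduced to Weyl's monotonicity (`A ≤ B` in the Loewner order implies
`λ↓(A) ≤ λ↓(B)`, by a Courant–Fischer dimension count) following Li and Mathias: with `τ` the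
`|S|`-th largest eigenvalue of `A - B`, the matrix `M = B + (A - B - τ)₊` dominates `B`, and
`M + τ` dominates `A`.
-/

open Matrix

/-- Schatten p-norm (1 ≤ p ≤ ∞) of a symmetric real matrix: the ℓ^p norm of its eigenvalue
vector. -/
noncomputable def schattenNorm (p : ENNReal) [Fact (1 ≤ p)] {n : ℕ}
    (M : Matrix (Fin n) (Fin n) ℝ) (hM : M.IsHermitian) : ℝ :=
  ‖(WithLp.equiv p (Fin n → ℝ)).symm hM.eigenvalues‖

open Finset

section Rearrangement

variable {n : ℕ}

noncomputable def sortDesc (f : Fin n → ℝ) : Fin n → ℝ :=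
  f ∘ Tuple.sort (OrderDual.toDual ∘ f)

theorem antitone_sortDesc (f : Fin n → ℝ) : Antitone (sortDesc f) :=
  monotone_toDual_comp_iff.mp (Tuple.monotone_sort (OrderDual.toDual ∘ f))

theorem sortDesc_eq_of_antitone {f g : Fin n → ℝ} {σ : Equiv.Perm (Fin n)} (hg : Antitone g)
    (hgf : g = f ∘ σ) : sortDesc f = g := by
  subst hgf
  exact Tuple.unique_antitone (antitone_sortDesc f) hg

theorem sortDesc_eq_self {f : Fin n → ℝ} (hf : Antitone f) : sortDesc f = f :=
  sortDesc_eq_of_antitone (σ := 1) hf rfl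

theorem sortDesc_comp_perm (f : Fin n → ℝ) (σ : Equiv.Perm (Fin n)) :
    sortDesc (f ∘ σ) = sortDesc f :=
  sortDesc_eq_of_antitone (antitone_sortDesc f)
    (show sortDesc f = (f ∘ σ) ∘ ((Tuple.sort (OrderDual.toDual ∘ f)).trans σ.symm) by
      ext; simp [sortDesc])

theorem sum_comp_sortDesc (f : Fin n → ℝ) (φ : ℝ → ℝ) :
    ∑ i, φ (sortDesc f i) = ∑ i, φ (f i) :=
  Equiv.sum_comp _ (φ ∘ f)

theorem sum_sortDesc (f : Fin n → ℝ) : ∑ i, sortDesc f i = ∑ i, f i :=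
  sum_comp_sortDesc f id

theorem exists_perm_eq_comp_of_map_univ_eq {f g : Fin n → ℝ}
    (h : univ.val.map f = univ.val.map g) : ∃ σ : Equiv.Perm (Fin n), f = g ∘ σ := by
  have hperm : (List.ofFn (sortDesc f)).Perm (List.ofFn (sortDesc g)) := by
    refine ((Equiv.Perm.ofFn_comp_perm _ f).trans ?_).trans (Equiv.Perm.ofFn_comp_perm _ g).symm
    rw [← Multiset.coe_eq_coe, ← Fin.univ_val_map, ← Fin.univ_val_map, h]
  have hsort : sortDesc f = sortDesc g := List.ofFn_injective <|
    hperm.eq_of_sortedGE (antitone_sortDesc f).sortedGE_ofFn (antitone_sortDesc g).sortedGE_ofFn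
  refine ⟨(Tuple.sort (OrderDual.toDual ∘ f)).symm.trans (Tuple.sort (OrderDual.toDual ∘ g)), ?_⟩
  ext i
  simpa [sortDesc] using congrFun hsort ((Tuple.sort (OrderDual.toDual ∘ f)).symm i)

noncomputable def sortDescSeq (f : Fin n → ℝ) (k : ℕ) : ℝ :=
  if h : k < n then sortDesc f ⟨k, h⟩ else 0

theorem sortDescSeq_le_of_le (f : Fin n → ℝ) {i j : ℕ} (hij : i ≤ j) (hj : j < n) :
    sortDescSeq f j ≤ sortDescSeq f i := by
  simp only [sortDescSeq, dif_pos hj, dif_pos (hij.trans_lt hj)]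
  exact antitone_sortDesc f (Fin.mk_le_mk.mpr hij)

theorem sum_range_sortDescSeq (f : Fin n → ℝ) (φ : ℝ → ℝ) :
    ∑ k ∈ range n, φ (sortDescSeq f k) = ∑ i, φ (f i) := by
  rw [← Fin.sum_univ_eq_sum_range (fun k => φ (sortDescSeq f k)), ← sum_comp_sortDesc f φ]
  simp [sortDescSeq]

theorem exists_card_eq_sum_eq_sum_range_sortDescSeq (f : Fin n → ℝ) {m : ℕ} (hm : m ≤ n) :
    ∃ S : Finset (Fin n), #S = m ∧ ∑ i ∈ S, f i = ∑ k ∈ range m, sortDescSeq f k := by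
  let e : Fin m ↪ Fin n :=
    (Fin.castLEEmb hm).trans (Tuple.sort (OrderDual.toDual ∘ f)).toEmbedding
  refine ⟨univ.map e, by simp, ?_⟩
  rw [sum_map, ← Fin.sum_univ_eq_sum_range]
  refine sum_congr rfl fun i _ => ?_
  simp [e, sortDescSeq, sortDesc, i.2.trans_le hm]
  rfl

theorem sum_max_sub_sortDescSeq (c : Fin n → ℝ) {k : ℕ} (hk : 0 < k) (hkn : k ≤ n) :
    ∑ i, max (c i - sortDescSeq c (k - 1)) 0 =
      ∑ j ∈ range k, sortDescSeq c j - k * sortDescSeq c (k - 1) := by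
  set τ := sortDescSeq c (k - 1)
  have hhead : ∀ j ∈ range k, max (sortDescSeq c j - τ) 0 = sortDescSeq c j - τ := fun j hj =>
    max_eq_left (sub_nonneg.mpr (sortDescSeq_le_of_le c (by simp at hj; omega) (by omega)))
  have htail : ∀ j ∈ Ico k n, max (sortDescSeq c j - τ) 0 = 0 := fun j hj =>
    max_eq_right (sub_nonpos.mpr
      (sortDescSeq_le_of_le c (by simp at hj; omega) (mem_Ico.mp hj).2))
  rw [← sum_range_sortDescSeq c fun t => max (t - τ) 0, ← sum_range_add_sum_Ico _ hkn,
    sum_congr rfl hhead, sum_eq_zero htail, add_zero, sum_sub_distrib, sum_const, card_range,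
    nsmul_eq_mul]

end Rearrangement

theorem max_sub_zero_add_sub (a τ : ℝ) : max (a - τ) 0 + τ - a = max (τ - a) 0 := by
  rcases le_total a τ with h | h
  · rw [max_eq_right (by linarith), max_eq_left (by linarith)]
    ring
  · rw [max_eq_left (by linarith), max_eq_right (by linarith)]
    ring

section ConjDiagonal

variable {ι : Type*} [Fintype ι] [DecidableEq ι] {W : Matrix ι ι ℝ}

theorem isHermitian_conj_diagonal (W : Matrix ι ι ℝ) (a : ι → ℝ) :
    (W * diagonal a * Wᵀ).IsHermitian := by
  simp [IsHermitian, conjTranspose_eq_transpose_of_trivial, transpose_mul, Matrix.mul_assoc]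

theorem posSemidef_conj_diagonal (W : Matrix ι ι ℝ) {a : ι → ℝ} (ha : 0 ≤ a) :
    (W * diagonal a * Wᵀ).PosSemidef := by
  simpa [conjTranspose_eq_transpose_of_trivial] using
    (PosSemidef.diagonal ha).mul_mul_conjTranspose_same W

theorem trace_conj_diagonal (hW : W * Wᵀ = 1) (a : ι → ℝ) :
    (W * diagonal a * Wᵀ).trace = ∑ i, a i := by
  rw [trace_mul_cycle, mul_eq_one_comm.mp hW, Matrix.one_mul, trace_diagonal]

theorem conj_diagonal_sub (W : Matrix ι ι ℝ) (a b : ι → ℝ) :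
    W * diagonal a * Wᵀ - W * diagonal b * Wᵀ = W * diagonal (a - b) * Wᵀ := by
  rw [← Matrix.sub_mul, ← Matrix.mul_sub, diagonal_sub]
  rfl

theorem conj_diagonal_const (hW : W * Wᵀ = 1) (c : ℝ) :
    W * diagonal (fun _ => c) * Wᵀ = c • 1 := by
  rw [← smul_one_eq_diagonal, Matrix.mul_smul, Matrix.mul_one, Matrix.smul_mul, hW]

theorem conj_diagonal_mul_conj_diagonal (hW : W * Wᵀ = 1) (a b : ι → ℝ) :
    W * diagonal a * Wᵀ * (W * diagonal b * Wᵀ) = W * diagonal (a * b) * Wᵀ := by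
  rw [show W * diagonal a * Wᵀ * (W * diagonal b * Wᵀ) =
      W * diagonal a * (Wᵀ * W) * diagonal b * Wᵀ by simp only [Matrix.mul_assoc],
    mul_eq_one_comm.mp hW, Matrix.mul_one, Matrix.mul_assoc W, diagonal_mul_diagonal]
  rfl

theorem conj_diagonal_comp_perm (W : Matrix ι ι ℝ) (a : ι → ℝ) (σ : Equiv.Perm ι) :
    W.submatrix id σ * diagonal (a ∘ σ) * (W.submatrix id σ)ᵀ = W * diagonal a * Wᵀ := by
  ext i k
  simp only [mul_apply, submatrix_apply, transpose_apply, id, Function.comp_apply, diagonal_apply,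
    mul_ite, mul_zero, sum_ite_eq', mem_univ, if_true]
  exact Equiv.sum_comp σ (fun j => W i j * a j * W k j)

theorem dotProduct_conj_diagonal_mulVec (W : Matrix ι ι ℝ) (a : ι → ℝ) (x : ι → ℝ) :
    x ⬝ᵥ (W * diagonal a * Wᵀ) *ᵥ x = ∑ j, a j * (Wᵀ *ᵥ x) j ^ 2 := by
  rw [← mulVec_mulVec, ← mulVec_mulVec, dotProduct_mulVec, ← mulVec_transpose]
  simp [dotProduct, mulVec_diagonal, sq, mul_left_comm]

theorem dotProduct_self_eq_sum_sq (hW : W * Wᵀ = 1) (x : ι → ℝ) :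
    x ⬝ᵥ x = ∑ j, (Wᵀ *ᵥ x) j ^ 2 := by
  simpa [← smul_one_eq_diagonal, hW] using dotProduct_conj_diagonal_mulVec W 1 x

open Polynomial in
theorem charpoly_conj_diagonal (hW : W * Wᵀ = 1) (a : ι → ℝ) :
    (W * diagonal a * Wᵀ).charpoly = ∏ i, (X - C (a i)) := by
  rw [charpoly_mul_comm, ← Matrix.mul_assoc, mul_eq_one_comm.mp hW, Matrix.one_mul,
    charpoly_diagonal]

theorem add_conj_diagonal_add_smul_one_sub {A B : Matrix ι ι ℝ} (hW : W * Wᵀ = 1) {c : ι → ℝ}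
    (hAB : A - B = W * diagonal c * Wᵀ) (τ : ℝ) :
    B + W * diagonal (fun i => max (c i - τ) 0) * Wᵀ + τ • 1 - A =
      W * diagonal (fun i => max (τ - c i) 0) * Wᵀ :=
  calc B + W * diagonal (fun i => max (c i - τ) 0) * Wᵀ + τ • 1 - A
      = W * diagonal (fun i => max (c i - τ) 0) * Wᵀ + W * diagonal (fun _ => τ) * Wᵀ -
          (A - B) := by rw [conj_diagonal_const hW]; abel
    _ = _ := by
      rw [hAB, ← Matrix.add_mul, ← Matrix.mul_add, diagonal_add, conj_diagonal_sub]
      simp only [Pi.sub_def, max_sub_zero_add_sub]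

end ConjDiagonal

namespace Matrix.IsHermitian

section Spectrum

variable {ι : Type*} [Fintype ι] [DecidableEq ι] {A : Matrix ι ι ℝ}

theorem eigenvectorUnitary_mul_transpose (hA : A.IsHermitian) :
    (hA.eigenvectorUnitary : Matrix ι ι ℝ) * (hA.eigenvectorUnitary : Matrix ι ι ℝ)ᵀ = 1 := by
  simpa [star_eq_conjTranspose, conjTranspose_eq_transpose_of_trivial] using
    mem_unitaryGroup_iff.mp hA.eigenvectorUnitary.2

theorem eq_conj_diagonal_eigenvalues (hA : A.IsHermitian) :
    A = (hA.eigenvectorUnitary : Matrix ι ι ℝ) * diagonal hA.eigenvalues *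
      (hA.eigenvectorUnitary : Matrix ι ι ℝ)ᵀ := by
  conv_lhs => rw [hA.spectral_theorem]
  simp [Unitary.conjStarAlgAut_apply, star_eq_conjTranspose, conjTranspose_eq_transpose_of_trivial]

theorem eigenvalues_eq_zero_or_one (hA : A.IsHermitian) (hAA : A * A = A) (i : ι) :
    hA.eigenvalues i = 0 ∨ hA.eigenvalues i = 1 :=
  IsIdempotentElem.spectrum_subset ℝ hAA (hA.eigenvalues_mem_spectrum_real i)

end Spectrum

variable {n : ℕ} {A B : Matrix (Fin n) (Fin n) ℝ}

open Polynomial in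
theorem exists_perm_eigenvalues_eq (hA : A.IsHermitian) {W : Matrix (Fin n) (Fin n) ℝ}
    {a : Fin n → ℝ} (hW : W * Wᵀ = 1) (hAW : A = W * diagonal a * Wᵀ) :
    ∃ σ : Equiv.Perm (Fin n), hA.eigenvalues = a ∘ σ := by
  apply exists_perm_eq_comp_of_map_univ_eq
  have hroots := hA.roots_charpoly_eq_eigenvalues
  have hchar : A.charpoly = ∏ i, (X - C (a i)) := by rw [hAW, charpoly_conj_diagonal hW]
  rw [hchar, roots_prod _ _ (prod_ne_zero_iff.mpr fun i _ => X_sub_C_ne_zero _)] at hroots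
  simpa using hroots.symm

theorem sortDesc_eigenvalues_eq (hA : A.IsHermitian) {W : Matrix (Fin n) (Fin n) ℝ}
    {a : Fin n → ℝ} (hW : W * Wᵀ = 1) (hAW : A = W * diagonal a * Wᵀ) :
    sortDesc hA.eigenvalues = sortDesc a := by
  obtain ⟨σ, hσ⟩ := hA.exists_perm_eigenvalues_eq hW hAW
  rw [hσ, sortDesc_comp_perm]

theorem exists_conj_diagonal_sortDesc (hA : A.IsHermitian) :
    ∃ W : Matrix (Fin n) (Fin n) ℝ, W * Wᵀ = 1 ∧
      A = W * diagonal (sortDesc hA.eigenvalues) * Wᵀ := by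
  set E := (hA.eigenvectorUnitary : Matrix (Fin n) (Fin n) ℝ)
  set σ := Tuple.sort (OrderDual.toDual ∘ hA.eigenvalues)
  refine ⟨E.submatrix id σ, ?_, ?_⟩
  · have h := conj_diagonal_comp_perm E 1 σ
    rwa [Pi.one_comp, diagonal_one', Matrix.mul_one, Matrix.mul_one,
      hA.eigenvectorUnitary_mul_transpose] at h
  · rw [sortDesc, conj_diagonal_comp_perm]
    exact hA.eq_conj_diagonal_eigenvalues

theorem sum_sortDesc_eigenvalues (hA : A.IsHermitian) :
    ∑ i, sortDesc hA.eigenvalues i = A.trace := by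
  simp [sum_sortDesc, hA.trace_eq_sum_eigenvalues]

theorem val_lt_of_sortDesc_eigenvalues_eq_one (hA : A.IsHermitian) (hAA : A * A = A) {d : ℕ}
    (htr : A.trace ≤ d) {k : Fin n} (hk : sortDesc hA.eigenvalues k = 1) : (k : ℕ) < d := by
  have hβ : 0 ≤ sortDesc hA.eigenvalues := fun i =>
    (hA.eigenvalues_eq_zero_or_one hAA _).elim (fun h => h.ge) fun h => h.ge.trans' zero_le_one
  have hcount : (k : ℝ) + 1 ≤ A.trace :=
    calc (k : ℝ) + 1 = ∑ i ∈ Iic k, 1 := by simp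
      _ ≤ ∑ i ∈ Iic k, sortDesc hA.eigenvalues i :=
        sum_le_sum fun i hi => hk.ge.trans (antitone_sortDesc _ (mem_Iic.mp hi))
      _ ≤ ∑ i, sortDesc hA.eigenvalues i :=
        sum_le_sum_of_subset_of_nonneg (subset_univ _) fun i _ _ => hβ i
      _ = A.trace := hA.sum_sortDesc_eigenvalues
  exact_mod_cast hcount.trans htr

end Matrix.IsHermitian

section Weyl

variable {n : ℕ}

theorem exists_ne_zero_mulVec_apply_eq_zero (M N : Matrix (Fin n) (Fin n) ℝ) (i : Fin n) :
    ∃ x ≠ 0, (∀ j < i, (M *ᵥ x) j = 0) ∧ ∀ j, i < j → (N *ᵥ x) j = 0 := by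
  let K : Matrix (Fin n) (Fin n) ℝ := of fun j => if j < i then M j else if i < j then N j else 0
  obtain ⟨x, hx0, hKx⟩ :=
    (exists_mulVec_eq_zero_iff (M := K)).mpr (det_eq_zero_of_row_eq_zero i fun k => by simp [K])
  refine ⟨x, hx0, fun j hj => ?_, fun j hj => ?_⟩
  · simpa [K, hj, mulVec] using congrFun hKx j
  · simpa [K, hj, hj.asymm, mulVec] using congrFun hKx j

theorem le_of_posSemidef_conj_diagonal_sub {W V : Matrix (Fin n) (Fin n) ℝ} {a b : Fin n → ℝ}
    (hW : W * Wᵀ = 1) (hV : V * Vᵀ = 1) (ha : Antitone a) (hb : Antitone b)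
    (h : (V * diagonal b * Vᵀ - W * diagonal a * Wᵀ).PosSemidef) : a ≤ b := by
  intro i
  -- `x` lies in the span of the first `i + 1` columns of `W` and of the last `n - i` of `V`.
  obtain ⟨x, hx0, hxV, hxW⟩ := exists_ne_zero_mulVec_apply_eq_zero Vᵀ Wᵀ i
  have hlow : a i * (x ⬝ᵥ x) ≤ x ⬝ᵥ (W * diagonal a * Wᵀ) *ᵥ x := by
    rw [dotProduct_self_eq_sum_sq hW, dotProduct_conj_diagonal_mulVec, mul_sum]
    refine sum_le_sum fun j _ => ?_
    rcases le_or_gt j i with hji | hij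
    · exact mul_le_mul_of_nonneg_right (ha hji) (sq_nonneg _)
    · simp [hxW j hij]
  have hup : x ⬝ᵥ (V * diagonal b * Vᵀ) *ᵥ x ≤ b i * (x ⬝ᵥ x) := by
    rw [dotProduct_self_eq_sum_sq hV, dotProduct_conj_diagonal_mulVec, mul_sum]
    refine sum_le_sum fun j _ => ?_
    rcases le_or_gt i j with hij | hji
    · exact mul_le_mul_of_nonneg_right (hb hij) (sq_nonneg _)
    · simp [hxV j hji]
  have hmid := h.dotProduct_mulVec_nonneg x
  rw [star_trivial, sub_mulVec, dotProduct_sub, sub_nonneg] at hmid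
  have hpos : 0 < x ⬝ᵥ x := lt_of_le_of_ne (sum_nonneg fun j _ => mul_self_nonneg _)
    (Ne.symm (dotProduct_self_eq_zero.not.mpr hx0))
  exact le_of_mul_le_mul_right (hlow.trans (hmid.trans hup)) hpos

end Weyl

namespace Matrix.IsHermitian

variable {n : ℕ} {A B : Matrix (Fin n) (Fin n) ℝ}

theorem sortDesc_eigenvalues_le (hA : A.IsHermitian) (hB : B.IsHermitian)
    (hAB : (B - A).PosSemidef) : sortDesc hA.eigenvalues ≤ sortDesc hB.eigenvalues := by
  obtain ⟨W, hW, hAW⟩ := hA.exists_conj_diagonal_sortDesc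
  obtain ⟨V, hV, hBV⟩ := hB.exists_conj_diagonal_sortDesc
  rw [hAW, hBV] at hAB
  exact le_of_posSemidef_conj_diagonal_sub hW hV (antitone_sortDesc _) (antitone_sortDesc _) hAB

theorem sortDesc_eigenvalues_add_smul_one (hA : A.IsHermitian) (c : ℝ)
    (hAc : (A + c • 1).IsHermitian) :
    sortDesc hAc.eigenvalues = fun i => sortDesc hA.eigenvalues i + c := by
  obtain ⟨W, hW, hAW⟩ := hA.exists_conj_diagonal_sortDesc
  have hshift : A + c • 1 = W * diagonal (fun i => sortDesc hA.eigenvalues i + c) * Wᵀ := by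
    conv_lhs => rw [hAW, ← conj_diagonal_const hW, ← Matrix.add_mul, ← Matrix.mul_add,
      diagonal_add]
  rw [hAc.sortDesc_eigenvalues_eq hW hshift, sortDesc_eq_self]
  exact fun i j hij => add_le_add_left (antitone_sortDesc _ hij) c

end Matrix.IsHermitian

theorem ConvexOn.add_rightDeriv_mul_sub_le {φ : ℝ → ℝ} (hφ : ConvexOn ℝ Set.univ φ) (x y : ℝ) :
    φ x + derivWithin φ (Set.Ioi x) x * (y - x) ≤ φ y := by
  have hx : x ∈ interior Set.univ := by simp
  rcases lt_trichotomy x y with hxy | rfl | hyx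
  · have h := hφ.rightDeriv_le_slope_of_mem_interior hx (Set.mem_univ y) hxy
    rw [slope_def_field, le_div_iff₀ (sub_pos.mpr hxy)] at h
    linarith
  · simp
  · have h := (hφ.slope_le_leftDeriv_of_mem_interior (Set.mem_univ y) hx hyx).trans
      (hφ.leftDeriv_le_rightDeriv_of_mem_interior hx)
    rw [slope_def_field, div_le_iff₀ (sub_pos.mpr hyx)] at h
    linarith

theorem convexOn_univ_norm_rpow {q : ℝ} (hq : 1 ≤ q) :
    ConvexOn ℝ Set.univ fun t : ℝ => ‖t‖ ^ q := by
  have himage : (norm '' Set.univ : Set ℝ) = Set.Ici 0 :=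
    Set.ext fun t => ⟨fun ⟨s, _, hs⟩ => Set.mem_Ici.mpr (hs ▸ norm_nonneg s),
      fun ht => ⟨t, trivial, Real.norm_of_nonneg ht⟩⟩
  refine ConvexOn.comp (g := fun x : ℝ => x ^ q) ?_ convexOn_univ_norm ?_ <;> rw [himage]
  · exact convexOn_rpow hq
  · exact fun a ha b _ hab => Real.rpow_le_rpow ha hab (by linarith)

theorem sum_range_mul_nonneg_of_antitone {s D : ℕ → ℝ} {N : ℕ}
    (hs : ∀ m, m + 1 < N → s (m + 1) ≤ s m)
    (hD : ∀ m ≤ N, 0 ≤ ∑ i ∈ range m, D i) (hDN : ∑ i ∈ range N, D i = 0) :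
    0 ≤ ∑ i ∈ range N, s i * D i := by
  have hparts := sum_range_by_parts s D N
  simp only [smul_eq_mul] at hparts
  rw [hparts, hDN, mul_zero, zero_sub, neg_nonneg]
  exact sum_nonpos fun m hm => mul_nonpos_of_nonpos_of_nonneg
    (sub_nonpos.mpr (hs m (by simp at hm; omega))) (hD _ (by simp at hm; omega))

section Majorization

variable {n : ℕ}

/-- `Majorizes y x` is `x ≺ y`; bounding the sum over every index set `S` by the sum of the
`#S` largest entries of `y` is equivalent to the usual condition on the largest entries of `x`. -/
def Majorizes (y x : Fin n → ℝ) : Prop :=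
  (∀ S : Finset (Fin n), ∑ i ∈ S, x i ≤ ∑ k ∈ range #S, sortDescSeq y k) ∧
    ∑ i, x i = ∑ i, y i

theorem Majorizes.sum_le_sum_of_convexOn {x y : Fin n → ℝ} (h : Majorizes y x) {φ : ℝ → ℝ}
    (hφ : ConvexOn ℝ Set.univ φ) : ∑ i, φ (x i) ≤ ∑ i, φ (y i) := by
  set X := sortDescSeq x
  set Y := sortDescSeq y
  set s := fun t => derivWithin φ (Set.Ioi t) t
  have hs : Monotone s := by simpa using hφ.monotoneOn_rightDeriv
  have hpartial : ∀ m ≤ n, ∑ k ∈ range m, X k ≤ ∑ k ∈ range m, Y k := by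
    intro m hm
    obtain ⟨S, rfl, hS⟩ := exists_card_eq_sum_eq_sum_range_sortDescSeq x hm
    exact hS ▸ h.1 S
  -- Abel summation against the monotone subgradient `s`.
  have habel : 0 ≤ ∑ k ∈ range n, s (X k) * (Y k - X k) := by
    refine sum_range_mul_nonneg_of_antitone
      (fun m hm => hs (sortDescSeq_le_of_le x m.le_succ hm)) (fun m hm => ?_) ?_
    · simpa [sum_sub_distrib] using hpartial m hm
    · have hx := sum_range_sortDescSeq x id
      have hy := sum_range_sortDescSeq y id
      simp only [id] at hx hy
      rw [sum_sub_distrib, hx, hy, h.2, sub_self]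
  have hgrad := sum_le_sum fun k (_ : k ∈ range n) => hφ.add_rightDeriv_mul_sub_le (X k) (Y k)
  rw [sum_add_distrib] at hgrad
  rw [← sum_range_sortDescSeq x φ, ← sum_range_sortDescSeq y φ]
  linarith

variable (p : ENNReal) [Fact (1 ≤ p)]

theorem Majorizes.norm_toLp_le {x y : Fin n → ℝ} (h : Majorizes y x) :
    ‖WithLp.toLp p x‖ ≤ ‖WithLp.toLp p y‖ := by
  rcases p.dichotomy with rfl | hp
  · simp only [PiLp.norm_toLp]
    set M := ‖y‖
    -- `(‖t‖ - M)₊` vanishes at every entry of `y`.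
    have hφ : ConvexOn ℝ Set.univ fun t : ℝ => max (‖t‖ - M) 0 :=
      (convexOn_univ_norm.sub (concaveOn_const M convex_univ)).sup (convexOn_const 0 convex_univ)
    have hsum := h.sum_le_sum_of_convexOn hφ
    rw [sum_eq_zero fun i _ => max_eq_right (sub_nonpos.mpr (norm_le_pi_norm y i))] at hsum
    refine pi_norm_le_iff_of_nonneg (norm_nonneg y) |>.mpr fun i => ?_
    have hi := (single_le_sum (fun j _ => le_max_right (‖x j‖ - M) 0) (mem_univ i)).trans hsum
    linarith [le_max_left (‖x i‖ - M) 0]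
  · have hq : 0 < p.toReal := by linarith
    rw [PiLp.norm_eq_sum hq, PiLp.norm_eq_sum hq]
    refine Real.rpow_le_rpow (sum_nonneg fun i _ => by positivity) ?_ (by positivity)
    simpa using h.sum_le_sum_of_convexOn (convexOn_univ_norm_rpow hp)

theorem norm_toLp_le_of_forall_norm_le {x y : Fin n → ℝ} (h : ∀ i, ‖x i‖ ≤ ‖y i‖) :
    ‖WithLp.toLp p x‖ ≤ ‖WithLp.toLp p y‖ := by
  rcases p.dichotomy with rfl | hp
  · simp only [PiLp.norm_toLp]
    exact pi_norm_le_iff_of_nonneg (norm_nonneg y) |>.mpr fun i =>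
      (h i).trans (norm_le_pi_norm y i)
  · have hq : 0 < p.toReal := by linarith
    rw [PiLp.norm_eq_sum hq, PiLp.norm_eq_sum hq]
    gcongr with i
    exact h i

theorem norm_toLp_comp_perm (x : Fin n → ℝ) (σ : Equiv.Perm (Fin n)) :
    ‖WithLp.toLp p (x ∘ σ)‖ = ‖WithLp.toLp p x‖ := by
  rw [← (LinearIsometryEquiv.piLpCongrLeft p ℝ ℝ σ).norm_map]
  congr 1
  ext i
  simp [LinearIsometryEquiv.piLpCongrLeft_apply, Equiv.piCongrLeft'_apply]

end Majorization

namespace Matrix.IsHermitian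

variable {n : ℕ} {A B : Matrix (Fin n) (Fin n) ℝ}

theorem sum_sortDesc_eigenvalues_sub_le (hA : A.IsHermitian) (hB : B.IsHermitian)
    (hC : (A - B).IsHermitian) (S : Finset (Fin n)) (τ : ℝ) :
    ∑ i ∈ S, (sortDesc hA.eigenvalues i - sortDesc hB.eigenvalues i) ≤
      ∑ i, max (hC.eigenvalues i - τ) 0 + #S * τ := by
  set c := hC.eigenvalues
  set V := (hC.eigenvectorUnitary : Matrix (Fin n) (Fin n) ℝ)
  have hV : V * Vᵀ = 1 := hC.eigenvectorUnitary_mul_transpose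
  set M := B + V * diagonal (fun i => max (c i - τ) 0) * Vᵀ
  have hM : M.IsHermitian := hB.add (isHermitian_conj_diagonal V _)
  have hMτ : (M + τ • 1).IsHermitian :=
    hM.add (conj_diagonal_const hV τ ▸ isHermitian_conj_diagonal V _)
  have hBM : sortDesc hB.eigenvalues ≤ sortDesc hM.eigenvalues :=
    sortDesc_eigenvalues_le hB hM (by
      simpa [M] using posSemidef_conj_diagonal V fun i => le_max_right (c i - τ) 0)
  have hMA : M + τ • 1 - A = V * diagonal (fun i => max (τ - c i) 0) * Vᵀ :=
    add_conj_diagonal_add_smul_one_sub hV hC.eq_conj_diagonal_eigenvalues τ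
  have hAM : sortDesc hA.eigenvalues ≤ fun i => sortDesc hM.eigenvalues i + τ := by
    rw [← sortDesc_eigenvalues_add_smul_one hM τ hMτ]
    exact sortDesc_eigenvalues_le hA hMτ
      (hMA ▸ posSemidef_conj_diagonal V fun i => le_max_right (τ - c i) 0)
  have htrace : ∑ i, (sortDesc hM.eigenvalues i - sortDesc hB.eigenvalues i) =
      ∑ i, max (c i - τ) 0 := by
    rw [sum_sub_distrib, hM.sum_sortDesc_eigenvalues, hB.sum_sortDesc_eigenvalues, trace_add,
      trace_conj_diagonal hV, add_sub_cancel_left]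
  calc ∑ i ∈ S, (sortDesc hA.eigenvalues i - sortDesc hB.eigenvalues i)
      ≤ ∑ i ∈ S, ((sortDesc hM.eigenvalues i - sortDesc hB.eigenvalues i) + τ) :=
        sum_le_sum fun i _ => by linarith [hAM i]
    _ ≤ ∑ i, (sortDesc hM.eigenvalues i - sortDesc hB.eigenvalues i) + #S * τ := by
        rw [sum_add_distrib, sum_const, nsmul_eq_mul]
        gcongr
        exacts [fun i _ _ => sub_nonneg.mpr (hBM i), subset_univ S]
    _ = ∑ i, max (c i - τ) 0 + #S * τ := by rw [htrace]

theorem majorizes_sortDesc_eigenvalues_sub (hA : A.IsHermitian) (hB : B.IsHermitian)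
    (hC : (A - B).IsHermitian) :
    Majorizes hC.eigenvalues (sortDesc hA.eigenvalues - sortDesc hB.eigenvalues) := by
  refine ⟨fun S => ?_, ?_⟩
  · obtain rfl | hS := S.eq_empty_or_nonempty
    · simp
    have hbound := sum_sortDesc_eigenvalues_sub_le hA hB hC S (sortDescSeq hC.eigenvalues (#S - 1))
    rwa [sum_max_sub_sortDescSeq _ hS.card_pos (card_le_univ S |>.trans_eq (Fintype.card_fin n)),
      sub_add_cancel] at hbound
  · rw [← sum_sortDesc hC.eigenvalues, hC.sum_sortDesc_eigenvalues, trace_sub,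
      ← hA.sum_sortDesc_eigenvalues, ← hB.sum_sortDesc_eigenvalues, ← sum_sub_distrib]
    rfl

end Matrix.IsHermitian

theorem sum_ite_val_lt_and_le {n : ℕ} (d : ℕ) (q : Fin n → Prop) [DecidablePred q] :
    ∑ k : Fin n, (if (k : ℕ) < d ∧ q k then (1 : ℝ) else 0) ≤ d := by
  rw [sum_boole, Nat.cast_le]
  simpa using card_le_card_of_injOn (t := range d) (fun k : Fin n => (k : ℕ))
    (fun k hk => mem_range.mpr (mem_filter.mp hk).2.1) Fin.val_injective.injOn

theorem abs_sub_ite_le {l t : ℝ} {q : Prop} [Decidable q] (ht : t = 0 ∨ t = 1)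
    (hq : t = 1 → q) : |l - if q ∧ 1 / 2 ≤ l then 1 else 0| ≤ |l - t| := by
  split_ifs with h
  · rcases ht with rfl | rfl
    · rw [sub_zero]
      exact (abs_le.mpr ⟨by linarith [h.2], by linarith⟩).trans (le_abs_self l)
    · rfl
  · rcases ht with rfl | rfl
    · rfl
    · have hl : l < 1 / 2 := lt_of_not_ge fun hl => h ⟨hq rfl, hl⟩
      rw [sub_zero]
      exact (abs_le.mpr ⟨by linarith, by linarith⟩).trans (neg_le_abs (l - 1))

/-- Projection onto the orthoprojectors of rank at most d: if P = U diag(λ) Uᵀ with U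
orthogonal and λ in descending order, then for every Schatten p-norm (1 ≤ p ≤ ∞) a nearest
point of O_d = {Π symmetric : Π² = Π, tr Π ≤ d} to P is Π = U diag(λ̂) Uᵀ with λ̂_k = 1 iff
k ≤ d and λ_k ≥ 1/2. -/
theorem stmt_17 (p : ENNReal) [Fact (1 ≤ p)] (n d : ℕ)
    (U : Matrix (Fin n) (Fin n) ℝ) (hU : U * Uᵀ = 1)
    (lam : Fin n → ℝ) (hlam : Antitone lam)
    (P : Matrix (Fin n) (Fin n) ℝ) (hP : P = U * Matrix.diagonal lam * Uᵀ)
    (lamHat : Fin n → ℝ)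
    (hlamHat : ∀ k : Fin n, lamHat k = if (k : ℕ) < d ∧ (1 : ℝ) / 2 ≤ lam k then 1 else 0) :
    let Pi := U * Matrix.diagonal lamHat * Uᵀ
    (Pi.IsHermitian ∧ Pi * Pi = Pi ∧ Pi.trace ≤ (d : ℝ)) ∧
    ∀ Pi' : Matrix (Fin n) (Fin n) ℝ, Pi'.IsHermitian → Pi' * Pi' = Pi' →
      Pi'.trace ≤ (d : ℝ) →
      ∀ (hΔ : (P - Pi).IsHermitian) (hΔ' : (P - Pi').IsHermitian),
        schattenNorm p (P - Pi) hΔ ≤ schattenNorm p (P - Pi') hΔ' := by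
  intro Pi
  have hlamHat_idem : lamHat * lamHat = lamHat := by
    ext k
    change lamHat k * lamHat k = lamHat k
    rw [hlamHat k]
    split_ifs <;> norm_num
  refine ⟨⟨isHermitian_conj_diagonal U lamHat, ?_, ?_⟩, ?_⟩
  · rw [conj_diagonal_mul_conj_diagonal hU, hlamHat_idem]
  · rw [trace_conj_diagonal hU, sum_congr rfl fun k _ => hlamHat k]
    exact sum_ite_val_lt_and_le d _
  intro Pi' hPi' hPi'_idem hPi'_trace hΔ hΔ'
  have hPherm : P.IsHermitian := hP ▸ isHermitian_conj_diagonal U lam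
  have hmaj := hPherm.majorizes_sortDesc_eigenvalues_sub hPi' hΔ'
  rw [hPherm.sortDesc_eigenvalues_eq hU hP, sortDesc_eq_self hlam] at hmaj
  obtain ⟨σ, hσ⟩ := hΔ.exists_perm_eigenvalues_eq hU (by rw [hP, conj_diagonal_sub])
  simp only [schattenNorm, WithLp.equiv_symm_apply, hσ, norm_toLp_comp_perm]
  refine (norm_toLp_le_of_forall_norm_le p fun k => ?_).trans (hmaj.norm_toLp_le p)
  simpa [Real.norm_eq_abs, hlamHat k] using
    abs_sub_ite_le (t := sortDesc hPi'.eigenvalues k) (hPi'.eigenvalues_eq_zero_or_one hPi'_idem _)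
      (hPi'.val_lt_of_sortDesc_eigenvalues_eq_one hPi'_idem hPi'_trace (k := k))
end

section
/- Let x_1,…,x_N ∈ R^n and let a hyperplane {x : ⟨a,x⟩ = β} (with unit normal a) minimize the sum of Euclidean distances E = Σ_k |⟨a,x_k⟩ − β| over all hyperplanes. Let M, M₊, M₋ be the number of data points with ⟨a,x_k⟩ equal to, greater than, and less than β respectively. Then |M₊ − M₋| ≤ M; in particular if N is odd the minimizing hyperplane contains at least one data point. -/
/-!
Only the offset `β` needs to vary. Moving it by a small `ε > 0` towards the points above the
hyperplane changes the sum of distances by `ε (M + M₋ - M₊)`, and moving it away by `ε (M + M₊ - M₋)`;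
minimality makes both nonnegative. If `N = M + M₊ + M₋` is odd, `M₊ ≠ M₋`, so `M ≥ 1`.
-/

open Filter Topology Finset

theorem abs_sub_add_eq_abs_sub_add_ite {y β ε : ℝ} (hε : 0 ≤ ε) (hgap : β < y → ε ≤ y - β) :
    |y - (β + ε)| = |y - β| + if β < y then -ε else ε := by
  split_ifs with hy
  · rw [abs_of_nonneg (by linarith [hgap hy]), abs_of_pos (sub_pos.2 hy)]
    ring
  · rw [abs_of_nonpos (by linarith), abs_of_nonpos (by linarith)]
    ring

section SumAbsSub

variable {ι : Type*} (s : Finset ι) (y : ι → ℝ) (β : ℝ)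

theorem card_filter_lt_le_card_filter_le_of_sum_abs_sub_le
    (hmin : ∀ b, ∑ k ∈ s, |y k - β| ≤ ∑ k ∈ s, |y k - b|) :
    #{k ∈ s | β < y k} ≤ #{k ∈ s | y k ≤ β} := by
  have hgap : ∀ᶠ ε in 𝓝[>] (0 : ℝ), ∀ k ∈ s, β < y k → ε ≤ y k - β := by
    refine (eventually_all_finset s).2 fun k _ => ?_
    by_cases hk : β < y k
    · filter_upwards [nhdsWithin_le_nhds (eventually_le_nhds (sub_pos.2 hk))] with ε hε _ using hε
    · exact Eventually.of_forall fun _ h => absurd h hk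
  obtain ⟨ε, hε, hεpos⟩ := (hgap.and self_mem_nhdsWithin).exists
  have hshift : ∑ k ∈ s, |y k - (β + ε)|
      = ∑ k ∈ s, |y k - β| + ε * (#{k ∈ s | y k ≤ β} - #{k ∈ s | β < y k}) := by
    rw [sum_congr rfl fun k hk => abs_sub_add_eq_abs_sub_add_ite hεpos.le (hε k hk),
      sum_add_distrib, sum_ite]
    simp only [sum_const, nsmul_eq_mul, not_lt]
    ring
  have hnonneg : (0 : ℝ) ≤ ε * (#{k ∈ s | y k ≤ β} - #{k ∈ s | β < y k}) := by
    linarith [hmin (β + ε)]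
  exact_mod_cast sub_nonneg.1 ((mul_nonneg_iff_of_pos_left hεpos).1 hnonneg)

theorem card_filter_gt_le_card_filter_ge_of_sum_abs_sub_le
    (hmin : ∀ b, ∑ k ∈ s, |y k - β| ≤ ∑ k ∈ s, |y k - b|) :
    #{k ∈ s | y k < β} ≤ #{k ∈ s | β ≤ y k} := by
  have habs_neg : ∀ u v : ℝ, |-u - v| = |u - -v| := fun u v => by
    rw [← abs_neg]
    ring_nf
  have hneg : ∀ b, ∑ k ∈ s, |-y k - -β| ≤ ∑ k ∈ s, |-y k - b| := fun b => by
    simpa only [habs_neg, neg_neg] using hmin (-b)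
  simpa only [neg_lt_neg_iff, neg_le_neg_iff] using
    card_filter_lt_le_card_filter_le_of_sum_abs_sub_le s (fun k => -y k) (-β) hneg

theorem card_filter_le_eq_card_filter_lt_add_card_filter_eq [DecidableEq ι] :
    #{k ∈ s | y k ≤ β} = #{k ∈ s | y k < β} + #{k ∈ s | y k = β} := by
  rw [← card_union_of_disjoint (disjoint_filter.2 fun _ _ h => h.ne), ← filter_or]
  simp only [le_iff_lt_or_eq]

end SumAbsSub

/-- If the hyperplane {x : ⟨a,x⟩ = β} (unit normal a) minimizes the sum of Euclidean
distances to data points x₁,…,x_N, and M, M₊, M₋ count the points on, strictly above, and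
strictly below the hyperplane, then |M₊ − M₋| ≤ M; in particular if N is odd the hyperplane
contains at least one data point. -/
theorem stmt_18 (n N : ℕ) (x : Fin N → EuclideanSpace ℝ (Fin n))
    (a : EuclideanSpace ℝ (Fin n)) (β : ℝ) (ha : ‖a‖ = 1)
    (hmin : ∀ (a' : EuclideanSpace ℝ (Fin n)) (β' : ℝ), ‖a'‖ = 1 →
      (∑ k, |(inner ℝ a (x k) : ℝ) - β|) ≤ ∑ k, |(inner ℝ a' (x k) : ℝ) - β'|) :
    let M := (Finset.univ.filter fun k => (inner ℝ a (x k) : ℝ) = β).card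
    let Mp := (Finset.univ.filter fun k => β < (inner ℝ a (x k) : ℝ)).card
    let Mm := (Finset.univ.filter fun k => (inner ℝ a (x k) : ℝ) < β).card
    |(Mp : ℤ) - (Mm : ℤ)| ≤ (M : ℤ) ∧ (Odd N → 1 ≤ M) := by
  intro M Mp Mm
  have hβ : ∀ b, ∑ k, |inner ℝ a (x k) - β| ≤ ∑ k, |inner ℝ a (x k) - b| :=
    fun b => hmin a b ha
  have hup : Mp ≤ Mm + M := by
    rw [← card_filter_le_eq_card_filter_lt_add_card_filter_eq]
    exact card_filter_lt_le_card_filter_le_of_sum_abs_sub_le _ _ _ hβ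
  have hdown : Mm ≤ Mp + M := by
    have h := card_filter_le_eq_card_filter_lt_add_card_filter_eq univ (fun k => -inner ℝ a (x k)) (-β)
    simp only [neg_le_neg_iff, neg_lt_neg_iff, neg_inj] at h
    rw [← h]
    exact card_filter_gt_le_card_filter_ge_of_sum_abs_sub_le _ _ _ hβ
  have htotal : Mm + M + Mp = N := by
    rw [← card_filter_le_eq_card_filter_lt_add_card_filter_eq]
    simpa [not_le] using card_filter_add_card_filter_not (s := univ) (fun k => inner ℝ a (x k) ≤ β)
  refine ⟨abs_sub_le_iff.2 ⟨by omega, by omega⟩, fun ⟨m, hm⟩ => by omega⟩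
end
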